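/- With notation as above, for every 0 ≤ j ≤ n−1 and p ≥ 1 one has e_j d_k^p y^p = e_j ∏_{i=1}^{p}(θ + i − k_{i+j}) and e_j y^p d_k^p = e_j ∏_{i=0}^{p-1}(θ − i − k_{j−i}), as elements of Q = C[∂, y^{±1}]*Γ. -/

import Mathlib

/-!
Both identities are proved by induction on `p`, moving one factor at a time past `e_j`.
Orthogonality of the `e_i` gives `e_j d_k = (∂ - k_{j+1} y⁻¹) e_{j+1}`, and `Γ` gives
`y e_i = e_{i+1} y` and `θ e_i = e_i θ`. From `[∂, y] = 1` one gets `θ y = y (θ + 1)` and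
`θ (∂ - c y⁻¹) = (∂ - c y⁻¹)(θ - 1)`, so moving `y` (resp. `∂ - c y⁻¹`) across a product of
factors `θ + c` shifts every constant by `+1` (resp. `-1`); the new factor is
`(∂ - c y⁻¹) y = θ + 1 - c`, resp. `y (∂ - c y⁻¹) = θ - c`. For the second identity the
induction runs along `e_{j+p}`, and `e_{j+pn} = e_j` brings it back to `e_j`.
-/

open Finset

noncomputable def omegaRoot (n : ℕ) : ℂ := Complex.exp (2 * Real.pi * Complex.I / n)

section CyclicIdempotent

variable {K A : Type*} [Field K] [Ring A] [Algebra K A] {n : ℕ} {ζ : K} {γ : A}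

-- When `γ ^ n = 1` and `ζ` is a primitive `n`-th root of unity, the projection onto the
-- `ζ⁻ⁱ`-eigenspace of `γ`.
noncomputable def cyclicIdempotent (n : ℕ) (ζ : K) (γ : A) (i : ℕ) : A :=
  (n : K)⁻¹ • ∑ j ∈ range n, (ζ ^ i • γ) ^ j

theorem cyclicIdempotent_eq_of_modEq (hζ : ζ ^ n = 1) {i i' : ℕ} (h : i ≡ i' [MOD n]) :
    cyclicIdempotent n ζ γ i = cyclicIdempotent n ζ γ i' := by
  rw [cyclicIdempotent, cyclicIdempotent, pow_eq_pow_mod i hζ, h, ← pow_eq_pow_mod i' hζ]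

theorem SemiconjBy.cyclicIdempotent {a : A} {i i' : ℕ}
    (h : SemiconjBy a (ζ ^ i • γ) (ζ ^ i' • γ)) :
    SemiconjBy a (cyclicIdempotent n ζ γ i) (cyclicIdempotent n ζ γ i') := by
  refine SemiconjBy.smul_right ?_ _
  simp only [SemiconjBy, mul_sum, sum_mul, (h.pow_right _).eq]

theorem smul_mul_cyclicIdempotent (hγ : γ ^ n = 1) (hζ : ζ ^ n = 1) (i : ℕ) :
    (ζ ^ i • γ) * cyclicIdempotent n ζ γ i = cyclicIdempotent n ζ γ i := by
  have hx : (ζ ^ i • γ) ^ n = 1 := by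
    rw [smul_pow, hγ, ← pow_mul, mul_comm, pow_mul, hζ, one_pow, one_smul]
  have hsum := geom_sum_succ' (x := ζ ^ i • γ) (n := n)
  rw [geom_sum_succ, hx, add_comm (1 : A)] at hsum
  rw [cyclicIdempotent, mul_smul_comm, add_right_cancel hsum]

theorem pow_mul_cyclicIdempotent (hγ : γ ^ n = 1) (hζ : ζ ^ n = 1) (i j : ℕ) :
    (ζ ^ i • γ) ^ j * cyclicIdempotent n ζ γ i = cyclicIdempotent n ζ γ i := by
  induction j with
  | zero => rw [pow_zero, one_mul]
  | succ j ih => rw [pow_succ, mul_assoc, smul_mul_cyclicIdempotent hγ hζ, ih]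

theorem cyclicIdempotent_mul_cyclicIdempotent (hζ : IsPrimitiveRoot ζ n) (hγ : γ ^ n = 1)
    (i i' : ℕ) :
    cyclicIdempotent n ζ γ i * cyclicIdempotent n ζ γ i' =
      ((n : K)⁻¹ * ∑ j ∈ range n, (ζ ^ i / ζ ^ i') ^ j) • cyclicIdempotent n ζ γ i' := by
  rcases n.eq_zero_or_pos with rfl | hn
  · simp [cyclicIdempotent]
  have hζ0 : ζ ^ i' ≠ 0 := pow_ne_zero _ (hζ.ne_zero hn.ne')
  have hsplit : ∀ j : ℕ, (ζ ^ i • γ) ^ j = (ζ ^ i / ζ ^ i') ^ j • (ζ ^ i' • γ) ^ j := by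
    intro j
    rw [← smul_pow, smul_smul, div_mul_cancel₀ _ hζ0]
  rw [mul_smul, sum_smul]
  conv_lhs => rw [cyclicIdempotent, smul_mul_assoc, sum_mul]
  simp only [hsplit, smul_mul_assoc, pow_mul_cyclicIdempotent hγ hζ.pow_eq_one]

theorem cyclicIdempotent_mul_of_modEq (hζ : IsPrimitiveRoot ζ n) (hγ : γ ^ n = 1) {i i' : ℕ}
    (h : i ≡ i' [MOD n]) :
    cyclicIdempotent n ζ γ i * cyclicIdempotent n ζ γ i' = cyclicIdempotent n ζ γ i' := by
  rcases n.eq_zero_or_pos with rfl | hn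
  · simp [cyclicIdempotent]
  rw [cyclicIdempotent_mul_cyclicIdempotent hζ hγ, pow_eq_pow_mod i hζ.pow_eq_one, h,
    ← pow_eq_pow_mod i' hζ.pow_eq_one, div_self (pow_ne_zero _ (hζ.ne_zero hn.ne'))]
  have : NeZero n := ⟨hn.ne'⟩
  have : NeZero (n : K) := hζ.neZero'
  simp [inv_mul_cancel₀ (NeZero.ne (n : K))]

theorem cyclicIdempotent_mul_of_not_modEq (hζ : IsPrimitiveRoot ζ n) (hγ : γ ^ n = 1)
    {i i' : ℕ} (h : ¬ i ≡ i' [MOD n]) :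
    cyclicIdempotent n ζ γ i * cyclicIdempotent n ζ γ i' = 0 := by
  rcases n.eq_zero_or_pos with rfl | hn
  · simp [cyclicIdempotent]
  have hζ0 : ζ ^ i' ≠ 0 := pow_ne_zero _ (hζ.ne_zero hn.ne')
  have hz : ζ ^ i / ζ ^ i' ≠ 1 := by
    rw [Ne, div_eq_one_iff_eq hζ0, (hζ.isOfFinOrder hn.ne').pow_eq_pow_iff_modEq,
      ← hζ.eq_orderOf]
    exact h
  have hzn : (ζ ^ i / ζ ^ i') ^ n = 1 := by
    rw [div_pow, ← pow_mul, ← pow_mul, mul_comm i, mul_comm i', pow_mul, pow_mul,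
      hζ.pow_eq_one, one_pow, one_pow, div_one]
  rw [cyclicIdempotent_mul_cyclicIdempotent hζ hγ, geom_sum_eq hz, hzn]
  simp

theorem cyclicIdempotent_mul_sum_smul (hζ : IsPrimitiveRoot ζ n) (hγ : γ ^ n = 1)
    (f : ℕ → K) (m : ℕ) :
    cyclicIdempotent n ζ γ m * ∑ i ∈ range n, f i • cyclicIdempotent n ζ γ i =
      f (m % n) • cyclicIdempotent n ζ γ m := by
  rcases n.eq_zero_or_pos with rfl | hn
  · simp [cyclicIdempotent]
  simp only [mul_sum, mul_smul_comm]
  rw [sum_eq_single (m % n), cyclicIdempotent_mul_of_modEq hζ hγ (Nat.mod_modEq m n).symm,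
    cyclicIdempotent_eq_of_modEq hζ.pow_eq_one (Nat.mod_modEq m n)]
  · intro i hi him
    rw [cyclicIdempotent_mul_of_not_modEq hζ hγ, smul_zero]
    rw [mem_range] at hi
    exact fun h => him ((Nat.mod_eq_of_lt hi).symm.trans h.symm)
  · exact fun h => absurd (mem_range.2 (Nat.mod_lt m hn)) h

theorem mul_cyclicIdempotent_of_mul_eq_smul {a : A} (h : a * γ = ζ • (γ * a)) (i : ℕ) :
    a * cyclicIdempotent n ζ γ i = cyclicIdempotent n ζ γ (i + 1) * a :=
  SemiconjBy.cyclicIdempotent <| by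
    rw [SemiconjBy, mul_smul_comm, h, smul_smul, pow_succ, smul_mul_assoc]

theorem cyclicIdempotent_mul_of_mul_eq_smul {b : A} (h : γ * b = ζ • (b * γ)) (i : ℕ) :
    cyclicIdempotent n ζ γ i * b = b * cyclicIdempotent n ζ γ (i + 1) :=
  (SemiconjBy.cyclicIdempotent <| by
    rw [SemiconjBy, mul_smul_comm, pow_succ, mul_smul, ← h, smul_mul_assoc]).symm

theorem commute_cyclicIdempotent_mul (hζ : ζ ≠ 0) {a b : A} (ha : a * γ = ζ • (γ * a))
    (hb : γ * b = ζ • (b * γ)) (i : ℕ) : Commute (cyclicIdempotent n ζ γ i) (a * b) := by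
  have hb' : b * γ = ζ⁻¹ • (γ * b) := by rw [hb, inv_smul_smul₀ hζ]
  have hγ : Commute (a * b) γ :=
    calc a * b * γ = ζ⁻¹ • (a * γ * b) := by rw [mul_assoc, hb', mul_smul_comm, mul_assoc]
      _ = γ * (a * b) := by rw [ha, smul_mul_assoc, inv_smul_smul₀ hζ, mul_assoc]
  exact (SemiconjBy.cyclicIdempotent (hγ.smul_right _)).symm

theorem cyclicIdempotent_mul_sub_units_inv_mul_sum {d : A} (hζ : IsPrimitiveRoot ζ n)
    (hγ : γ ^ n = 1) (u : Aˣ) (huγ : ↑u * γ = ζ • (γ * ↑u)) (hγd : γ * d = ζ • (d * γ))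
    {k : ℤ → K} (hk0 : k 0 = 0) (hk : Function.Periodic k n) (j : ℕ) :
    cyclicIdempotent n ζ γ j * (d - ↑u⁻¹ * ∑ i ∈ Icc 1 (n - 1), k i • cyclicIdempotent n ζ γ i) =
      (d - k (j + 1) • ↑u⁻¹) * cyclicIdempotent n ζ γ (j + 1) := by
  have hsum : ∑ i ∈ Icc 1 (n - 1), k i • cyclicIdempotent n ζ γ i =
      ∑ i ∈ range n, k i • cyclicIdempotent n ζ γ i := by
    refine sum_subset (fun i hi => by simp only [mem_Icc, mem_range] at hi ⊢; omega) ?_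
    intro i hi hi'
    obtain rfl : i = 0 := by simp only [mem_Icc, mem_range] at hi hi'; omega
    rw [Nat.cast_zero, hk0, zero_smul]
  have hinv :=
    (SemiconjBy.units_inv_symm_left (mul_cyclicIdempotent_of_mul_eq_smul (n := n) huγ j)).eq
  have hkmod : k ((j + 1) % n : ℕ) = k (j + 1) := by
    rw [Int.natCast_mod, Int.emod_def, Nat.cast_succ, mul_comm]
    exact hk.sub_int_mul_eq _
  rw [mul_sub, ← mul_assoc, ← hinv, mul_assoc, hsum, cyclicIdempotent_mul_sum_smul hζ hγ, hkmod,
    cyclicIdempotent_mul_of_mul_eq_smul hγd, mul_smul_comm, sub_mul, smul_mul_assoc]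

end CyclicIdempotent

section ShiftedProducts

variable {K A ι : Type*} [CommRing K] [Ring A] [Algebra K A] {θ a : A} {s : K}

theorem add_smul_one_mul_of_mul_eq (h : θ * a = a * (θ + s • 1)) (c : K) :
    (θ + c • 1) * a = a * (θ + (c + s) • 1) := by
  simp only [add_mul, mul_add, h, smul_one_mul, mul_smul_one, add_smul]
  abel

theorem list_prod_map_add_smul_one_mul_of_mul_eq (h : θ * a = a * (θ + s • 1))
    (l : List ι) (f : ι → K) :
    (l.map fun i => θ + f i • 1).prod * a = a * (l.map fun i => θ + (f i + s) • 1).prod := by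
  induction l with
  | nil => simp
  | cons i l ih =>
    simp only [List.map_cons, List.prod_cons]
    rw [mul_assoc, ih, ← mul_assoc, add_smul_one_mul_of_mul_eq h, mul_assoc]

theorem Commute.list_prod_map_add_smul_one {b : A} (h : Commute b θ) (l : List ι) (f : ι → K) :
    Commute b (l.map fun i => θ + f i • 1).prod :=
  Commute.list_prod_right _ _ fun _ hx => by
    obtain ⟨i, -, rfl⟩ := List.mem_map.1 hx
    exact h.add_right ((Commute.one_right b).smul_right _)

end ShiftedProducts

section Weyl

variable {K A : Type*} [CommRing K] [Ring A] [Algebra K A] (u : Aˣ) {d : A}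

theorem Units.mul_mul_units_of_sub_eq_one (hW : d * u - u * d = 1) :
    ↑u * d * ↑u = ↑u * (↑u * d + (1 : K) • 1) := by
  rw [mul_assoc, sub_eq_iff_eq_add.1 hW, one_smul, add_comm]

theorem Units.mul_mul_sub_smul_inv_of_sub_eq_one (hW : d * u - u * d = 1) (c : K) :
    ↑u * d * (d - c • ↑u⁻¹) = (d - c • ↑u⁻¹) * (↑u * d + (-1 : K) • 1) := by
  have hdu : d * u = 1 + u * d := sub_eq_iff_eq_add.1 hW
  have hconj : ↑u * d * ↑u⁻¹ = d - ↑u⁻¹ := by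
    rw [show ↑u * d = d * ↑u - 1 by rw [hdu]; abel, sub_mul, u.mul_inv_cancel_right, one_mul]
  calc ↑u * d * (d - c • ↑u⁻¹) = ↑u * d * d - c • (↑u * d * ↑u⁻¹) := by
        rw [mul_sub, mul_smul_comm]
    _ = d * ↑u * d - d - c • (↑u⁻¹ * ↑u * d) + c • ↑u⁻¹ := by
        rw [hconj, hdu, u.inv_mul, one_mul, add_mul, one_mul, smul_sub]
        abel
    _ = (d - c • ↑u⁻¹) * (↑u * d + (-1 : K) • 1) := by
        rw [mul_add, mul_smul_one, sub_mul, smul_mul_assoc, neg_one_smul, ← mul_assoc,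
          ← mul_assoc]
        abel

theorem Units.sub_smul_inv_mul_of_sub_eq_one (hW : d * u - u * d = 1) (c : K) :
    (d - c • ↑u⁻¹) * ↑u = ↑u * d + (1 - c) • 1 := by
  rw [sub_mul, smul_mul_assoc, u.inv_mul, sub_eq_iff_eq_add.1 hW, sub_smul, one_smul, add_comm,
    add_sub_assoc]

theorem Units.mul_sub_smul_inv (c : K) : ↑u * (d - c • ↑u⁻¹) = ↑u * d + (-c) • 1 := by
  rw [mul_sub, mul_smul_comm, u.mul_inv, _root_.neg_smul, sub_eq_add_neg]

end Weyl

section EulerProducts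

variable {K A : Type*} [CommRing K] [Ring A] [Algebra K A] {e : ℕ → A} {d δ : A} {κ : ℤ → K}
  (u : Aˣ)

theorem mul_pow_mul_units_pow_eq_list_prod (hW : d * u - u * d = 1)
    (hue : ∀ i, ↑u * e i = e (i + 1) * ↑u) (heθ : ∀ i, Commute (e i) (↑u * d))
    (heδ : ∀ i, e i * δ = (d - κ (i + 1) • ↑u⁻¹) * e (i + 1)) (p j : ℕ) :
    e j * δ ^ p * ↑u ^ p =
      e j * ((List.range p).map fun i : ℕ => ↑u * d + ((i : K) + 1 - κ (i + 1 + j)) • 1).prod := by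
  induction p generalizing j with
  | zero => simp
  | succ p ih =>
    have hshift := list_prod_map_add_smul_one_mul_of_mul_eq (u.mul_mul_units_of_sub_eq_one hW)
      (List.range p) fun i : ℕ => (i : K) + 1 - κ (i + 1 + (j + 1 : ℕ))
    have hcons : (↑u * d + (1 - κ (j + 1)) • 1) * ((List.range p).map fun i : ℕ =>
          ↑u * d + ((i : K) + 1 - κ (i + 1 + (j + 1 : ℕ)) + 1) • 1).prod =
        ((List.range (p + 1)).map fun i : ℕ =>
          ↑u * d + ((i : K) + 1 - κ (i + 1 + j)) • 1).prod := by
      rw [List.prod_range_succ']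
      congr 2
      · push_cast; ring_nf
      · refine List.map_congr_left fun i _ => ?_
        push_cast; ring_nf
    calc e j * δ ^ (p + 1) * ↑u ^ (p + 1) = (e j * δ) * (δ ^ p * ↑u ^ p) * ↑u := by
          rw [pow_succ', pow_succ]; simp only [mul_assoc]
      _ = (d - κ (j + 1) • ↑u⁻¹) * (e (j + 1) * δ ^ p * ↑u ^ p) * ↑u := by
          rw [heδ]; simp only [mul_assoc]
      _ = (d - κ (j + 1) • ↑u⁻¹) * (((List.range p).map fun i : ℕ =>
            ↑u * d + ((i : K) + 1 - κ (i + 1 + (j + 1 : ℕ))) • 1).prod * (e (j + 1) * ↑u)) := by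
          rw [ih, ((heθ _).list_prod_map_add_smul_one _ _).eq]; simp only [mul_assoc]
      _ = (d - κ (j + 1) • ↑u⁻¹) * ↑u * ((List.range p).map fun i : ℕ =>
            ↑u * d + ((i : K) + 1 - κ (i + 1 + (j + 1 : ℕ)) + 1) • 1).prod * e j := by
          rw [← hue, ← mul_assoc _ (↑u : A), hshift]; simp only [mul_assoc]
      _ = e j * ((List.range (p + 1)).map fun i : ℕ =>
            ↑u * d + ((i : K) + 1 - κ (i + 1 + j)) • 1).prod := by
          rw [u.sub_smul_inv_mul_of_sub_eq_one hW, hcons,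
            ((heθ _).list_prod_map_add_smul_one _ _).eq]

theorem mul_units_pow_mul_pow_eq_list_prod (hW : d * u - u * d = 1)
    (hue : ∀ i, ↑u * e i = e (i + 1) * ↑u) (heθ : ∀ i, Commute (e i) (↑u * d))
    (heδ : ∀ i, e i * δ = (d - κ (i + 1) • ↑u⁻¹) * e (i + 1)) (p j : ℕ) :
    e (j + p) * ↑u ^ p * δ ^ p =
      e (j + p) * ((List.range p).map fun i : ℕ =>
        ↑u * d + (-(i : K) - κ (j + p - i)) • 1).prod := by
  induction p with
  | zero => simp
  | succ p ih =>
    have hshift := list_prod_map_add_smul_one_mul_of_mul_eq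
      (u.mul_mul_sub_smul_inv_of_sub_eq_one hW (κ ((j + p : ℕ) + 1)))
      (List.range p) fun i : ℕ => -(i : K) - κ (j + p - i)
    have hcons : (↑u * d + (-κ ((j + p : ℕ) + 1)) • 1) * ((List.range p).map fun i : ℕ =>
          ↑u * d + (-(i : K) - κ (j + p - i) + -1) • 1).prod =
        ((List.range (p + 1)).map fun i : ℕ =>
          ↑u * d + (-(i : K) - κ (j + (p + 1 : ℕ) - i)) • 1).prod := by
      rw [List.prod_range_succ']
      congr 2
      · push_cast; ring_nf
      · refine List.map_congr_left fun i _ => ?_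
        push_cast; ring_nf
    calc e (j + (p + 1)) * ↑u ^ (p + 1) * δ ^ (p + 1)
          = (e (j + p + 1) * ↑u) * (↑u ^ p * δ ^ p) * δ := by
          rw [pow_succ', pow_succ, ← add_assoc]; simp only [mul_assoc]
      _ = ↑u * (e (j + p) * ↑u ^ p * δ ^ p) * δ := by rw [← hue]; simp only [mul_assoc]
      _ = ↑u * (((List.range p).map fun i : ℕ =>
            ↑u * d + (-(i : K) - κ (j + p - i)) • 1).prod * (d - κ ((j + p : ℕ) + 1) • ↑u⁻¹)) *
            e (j + p + 1) := by
          rw [ih, ((heθ _).list_prod_map_add_smul_one _ _).eq]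
          simp only [mul_assoc]
          rw [heδ]
      _ = e (j + (p + 1)) * ((List.range (p + 1)).map fun i : ℕ =>
            ↑u * d + (-(i : K) - κ (j + (p + 1 : ℕ) - i)) • 1).prod := by
          rw [hshift, ← mul_assoc, u.mul_sub_smul_inv, hcons, ← add_assoc,
            ((heθ _).list_prod_map_add_smul_one _ _).eq]

end EulerProducts

/-- In `Q = ℂ[∂, y^{±1}] * Γ` with the idempotents `e j` and `d_k`, `θ = y∂` as usual,
for every `0 ≤ j ≤ n-1` and `p ≥ 1`:
`e_j d_k^p y^p = e_j ∏_{i=1}^{p} (θ + i − k_{i+j})` and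
`e_j y^p d_k^p = e_j ∏_{i=0}^{p-1} (θ − i − k_{j−i})`. -/
theorem statement2 {Q : Type*} [Ring Q] [Algebra ℂ Q] (n : ℕ) (hn : 0 < n)
    (y yinv d γ : Q)
    (hy : y * yinv = 1) (hy' : yinv * y = 1)
    (hWeyl : d * y - y * d = 1)
    (hγ : γ ^ n = 1)
    (hyγ : y * γ = omegaRoot n • (γ * y))
    (hγd : γ * d = omegaRoot n • (d * γ))
    (e : ℕ → Q)
    (he : ∀ i, e i = (n : ℂ)⁻¹ • ∑ j ∈ range n, ((omegaRoot n) ^ i • γ) ^ j)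
    (k : ℤ → ℂ) (hk0 : k 0 = 0) (hkper : ∀ j : ℤ, k (j + n) = k j)
    (dk θ : Q)
    (hdk : dk = d - yinv * ∑ i ∈ Icc 1 (n - 1), k i • e i)
    (hθ : θ = y * d) :
    ∀ j : ℕ, j < n → ∀ p : ℕ, 1 ≤ p →
      (e j * dk ^ p * y ^ p =
        e j * ((List.range p).map (fun (i : ℕ) =>
          θ + (((i : ℂ) + 1) • (1 : Q)) - (k ((i : ℤ) + 1 + (j : ℤ))) • (1 : Q))).prod)
      ∧ (e j * y ^ p * dk ^ p =
        e j * ((List.range p).map (fun (i : ℕ) =>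
          θ - ((i : ℂ) • (1 : Q)) - (k ((j : ℤ) - (i : ℤ))) • (1 : Q))).prod) := by
  intro j _ p _
  have hω : IsPrimitiveRoot (omegaRoot n) n := Complex.isPrimitiveRoot_exp n hn.ne'
  obtain ⟨u, rfl, rfl⟩ : ∃ u : Qˣ, ↑u = y ∧ ↑u⁻¹ = yinv := ⟨⟨y, yinv, hy, hy'⟩, rfl, rfl⟩
  obtain rfl : e = cyclicIdempotent n (omegaRoot n) γ := funext he
  subst hdk hθ
  have hue := mul_cyclicIdempotent_of_mul_eq_smul (n := n) hyγ
  have heθ := commute_cyclicIdempotent_mul (n := n) (hω.ne_zero hn.ne') hyγ hγd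
  have heδ := cyclicIdempotent_mul_sub_units_inv_mul_sum hω hγ u hyγ hγd hk0 hkper
  constructor
  · rw [mul_pow_mul_units_pow_eq_list_prod u hWeyl hue heθ heδ]
    refine congrArg _ (congrArg _ (List.map_congr_left fun i _ => ?_))
    rw [sub_smul, add_sub_assoc]
  · have hj : j + p * (n - 1) + p = j + p * n := by
      rw [add_assoc, ← Nat.mul_succ, Nat.succ_eq_add_one, Nat.sub_add_cancel hn]
    have hmod : j ≡ j + p * (n - 1) + p [MOD n] := by
      rw [hj]; exact (Nat.add_mul_mod_self_right j p n).symm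
    rw [cyclicIdempotent_eq_of_modEq hω.pow_eq_one hmod,
      mul_units_pow_mul_pow_eq_list_prod u hWeyl hue heθ heδ]
    refine congrArg _ (congrArg _ (List.map_congr_left fun i _ => ?_))
    have hjZ : ((j + p * (n - 1) : ℕ) : ℤ) + p - i = j - i + p * n := by
      have := congrArg (Nat.cast : ℕ → ℤ) hj
      push_cast at this ⊢
      linarith
    rw [hjZ, Function.Periodic.nat_mul hkper p, sub_smul, _root_.neg_smul]
    abel
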